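/- arXiv:2104.07631 — 7 statements merged into one kernel-verified Lean document; each statement's English description precedes it below -/
import Mathlib

section
/- There is no finite connected simple graph G = (V,E) with the edge set T ⊆ E of a spanning tree of G such that E∖T consists of exactly four distinct edges s₁, s₂, s₃, s₄ and there are four distinct tree edges f₁, f₂, f₃, f₄ ∈ T with: the set of non-tree edges covering f₁ equals {s₁, s₂, s₃}, the set covering f₂ equals {s₁, s₄}, the set covering f₃ equals {s₂, s₄}, and the set covering f₄ equals {s₃, s₄}. Consequently, the Min Sum Set Cover instance given by the hypergraph on vertex set {1,2,3,4} with hyperedges {1,2,3}, {1,4}, {2,4}, {3,4} does not arise from any Minimum Reconnection Time instance. -/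
/-!
Root the tree at an endpoint `r` of `s₄`. For a tree edge `f`, let `D f` be the set of vertices
cut off from `r` when `f` is deleted; a non-tree edge covers `f` exactly when it crosses `D f`.
These sets form a laminar family: any two are disjoint or nested. The other endpoint of `s₄` lies
in `D f₂`, `D f₃` and `D f₄`, so these form a chain `D fₖ ⊆ D fⱼ ⊆ D fᵢ`. The non-tree edge that
covers `f₁` and `fₖ` but not `fⱼ` lies inside `D fⱼ` and crosses `D f₁`, which forces
`D f₁ ⊆ D fⱼ`. The one that covers `f₁` and `fᵢ` but not `fⱼ` then lies outside `D fⱼ ⊇ D f₁`,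
so it does not cover `f₁` after all.
-/

namespace Sym2

variable {V : Type*}

def Crosses (s : Sym2 V) (D : Set V) : Prop :=
  (∃ a ∈ s, a ∈ D) ∧ ∃ b ∈ s, b ∉ D

theorem crosses_mk_iff {D : Set V} {a b : V} : s(a, b).Crosses D ↔ ¬(a ∈ D ↔ b ∈ D) := by
  simp only [Crosses, mem_iff, exists_eq_or_imp, exists_eq_left]
  tauto

theorem subset_of_crosses {A B C : Set V} {x : Sym2 V} (hCB : C ⊆ B) (hxC : x.Crosses C)
    (hxB : ¬x.Crosses B) (hxA : x.Crosses A) (hAB : (A ∩ B).Nonempty → A ⊆ B ∨ B ⊆ A) :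
    A ⊆ B := by
  have hx : ∀ z ∈ x, z ∈ B := by
    obtain ⟨⟨c, hcx, hc⟩, -⟩ := hxC
    by_contra! ⟨z, hzx, hz⟩
    exact hxB ⟨⟨c, hcx, hCB hc⟩, z, hzx, hz⟩
  obtain ⟨⟨a, hax, ha⟩, d, hdx, hd⟩ := hxA
  exact (hAB ⟨a, ha, hx a hax⟩).resolve_right fun hBA => hd (hBA (hx d hdx))

theorem not_crosses_of_subset {A B C : Set V} {y : Sym2 V} (hAB : A ⊆ B) (hBC : B ⊆ C)
    (hyC : y.Crosses C) (hyB : ¬y.Crosses B) : ¬y.Crosses A := by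
  obtain ⟨-, c, hcy, hc⟩ := hyC
  rintro ⟨⟨a, hay, ha⟩, -⟩
  exact hyB ⟨⟨a, hay, hAB ha⟩, c, hcy, fun h => hc (hBC h)⟩

theorem false_of_laminar_crossings {ι : Type*} {D : ι → Set V}
    (hD : ∀ i j, (D i ∩ D j).Nonempty → D i ⊆ D j ∨ D j ⊆ D i) {r b : V} (hr : ∀ i, r ∉ D i)
    {s₁ s₂ s₃ : Sym2 V} {f₁ f₂ f₃ f₄ : ι}
    (h₁₂ : s₁ ≠ s₂) (h₁₃ : s₁ ≠ s₃) (h₁₄ : s₁ ≠ s(r, b)) (h₂₃ : s₂ ≠ s₃) (h₂₄ : s₂ ≠ s(r, b))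
    (h₃₄ : s₃ ≠ s(r, b))
    (hc₁ : {s ∈ ({s₁, s₂, s₃, s(r, b)} : Set (Sym2 V)) | s.Crosses (D f₁)} = {s₁, s₂, s₃})
    (hc₂ : {s ∈ ({s₁, s₂, s₃, s(r, b)} : Set (Sym2 V)) | s.Crosses (D f₂)} = {s₁, s(r, b)})
    (hc₃ : {s ∈ ({s₁, s₂, s₃, s(r, b)} : Set (Sym2 V)) | s.Crosses (D f₃)} = {s₂, s(r, b)})
    (hc₄ : {s ∈ ({s₁, s₂, s₃, s(r, b)} : Set (Sym2 V)) | s.Crosses (D f₄)} = {s₃, s(r, b)}) :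
    False := by
  have crosses_iff : ∀ {N S : Set (Sym2 V)} {i}, {s ∈ N | s.Crosses (D i)} = S →
      ∀ s ∈ N, (s.Crosses (D i) ↔ s ∈ S) := by
    rintro N S i rfl s hs
    simp [hs]
  obtain ⟨c₁₁, c₁₂, c₁₃, -⟩ : s₁.Crosses (D f₁) ∧ s₂.Crosses (D f₁) ∧ s₃.Crosses (D f₁) ∧
      ¬s(r, b).Crosses (D f₁) := by
    simpa [h₁₄.symm, h₂₄.symm, h₃₄.symm] using crosses_iff hc₁
  obtain ⟨c₂₁, n₂₂, n₂₃, c₂₄⟩ : s₁.Crosses (D f₂) ∧ ¬s₂.Crosses (D f₂) ∧ ¬s₃.Crosses (D f₂) ∧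
      s(r, b).Crosses (D f₂) := by
    simpa [h₁₂.symm, h₂₄, h₁₃.symm, h₃₄] using crosses_iff hc₂
  obtain ⟨n₃₁, c₃₂, n₃₃, c₃₄⟩ : ¬s₁.Crosses (D f₃) ∧ s₂.Crosses (D f₃) ∧ ¬s₃.Crosses (D f₃) ∧
      s(r, b).Crosses (D f₃) := by
    simpa [h₁₂, h₁₄, h₂₃.symm, h₃₄] using crosses_iff hc₃
  obtain ⟨n₄₁, n₄₂, c₄₃, c₄₄⟩ : ¬s₁.Crosses (D f₄) ∧ ¬s₂.Crosses (D f₄) ∧ s₃.Crosses (D f₄) ∧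
      s(r, b).Crosses (D f₄) := by
    simpa [h₁₃, h₁₄, h₂₃, h₂₄] using crosses_iff hc₄
  have hb : ∀ i, s(r, b).Crosses (D i) → b ∈ D i := fun i h => by
    by_contra hb
    exact crosses_mk_iff.1 h (iff_of_false (hr i) hb)
  have chain : ∀ {i j k : ι} {x y : Sym2 V}, D i ⊆ D j → D j ⊆ D k →
      x.Crosses (D f₁) ∧ x.Crosses (D i) → ¬x.Crosses (D j) →
      y.Crosses (D f₁) ∧ y.Crosses (D k) → ¬y.Crosses (D j) → False := by
    rintro _ j _ _ _ hij hjk ⟨hx₁, hx⟩ hxj ⟨hy₁, hy⟩ hyj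
    exact not_crosses_of_subset (subset_of_crosses hij hx hxj hx₁ (hD f₁ j)) hjk hy hyj hy₁
  have p₂ : s₁.Crosses (D f₁) ∧ s₁.Crosses (D f₂) := ⟨c₁₁, c₂₁⟩
  have p₃ : s₂.Crosses (D f₁) ∧ s₂.Crosses (D f₃) := ⟨c₁₂, c₃₂⟩
  have p₄ : s₃.Crosses (D f₁) ∧ s₃.Crosses (D f₄) := ⟨c₁₃, c₄₃⟩
  rcases hD f₂ f₃ ⟨b, hb _ c₂₄, hb _ c₃₄⟩ with h₂₃ | h₃₂ <;>
    rcases hD f₂ f₄ ⟨b, hb _ c₂₄, hb _ c₄₄⟩ with h₂₄ | h₄₂ <;>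
    rcases hD f₃ f₄ ⟨b, hb _ c₃₄, hb _ c₄₄⟩ with h₃₄ | h₄₃
  · exact chain h₂₃ h₃₄ p₂ n₃₁ p₄ n₃₃
  · exact chain h₂₄ h₄₃ p₂ n₄₁ p₃ n₄₂
  · exact chain h₂₃ h₃₄ p₂ n₃₁ p₄ n₃₃
  · exact chain h₄₂ h₂₃ p₄ n₂₃ p₃ n₂₂
  · exact chain h₃₂ h₂₄ p₃ n₂₂ p₄ n₂₃
  · exact chain h₃₂ h₂₄ p₃ n₂₂ p₄ n₂₃
  · exact chain h₃₄ h₄₂ p₃ n₄₂ p₂ n₄₁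
  · exact chain h₄₃ h₃₂ p₄ n₃₃ p₂ n₃₁

end Sym2

namespace SimpleGraph

variable {V : Type*} {G : SimpleGraph V}

theorem Preconnected.reachable_deleteEdges_or (hG : G.Preconnected) (u v x : V) :
    (G.deleteEdges {s(u, v)}).Reachable x u ∨ (G.deleteEdges {s(u, v)}).Reachable x v := by
  classical
  obtain ⟨p, hp⟩ := hG.exists_isPath x u
  by_cases huv : s(u, v) ∈ p.edges
  · have hv := p.snd_mem_support_of_mem_edges huv
    have hu := Walk.endpoint_notMem_support_takeUntil hp hv (p.adj_of_mem_edges huv).ne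
    refine .inr ⟨(p.takeUntil v hv).toDeleteEdges _ fun e he => ?_⟩
    rintro rfl
    exact hu ((p.takeUntil v hv).fst_mem_support_of_mem_edges he)
  · exact .inl ⟨p.toDeleteEdges _ fun e he h => huv (h ▸ he)⟩

theorem Preconnected.reachable_deleteEdges_of_not_reachable (hG : G.Preconnected) {e : Sym2 V}
    {x y z : V} (hxz : ¬(G.deleteEdges {e}).Reachable x z)
    (hyz : ¬(G.deleteEdges {e}).Reachable y z) : (G.deleteEdges {e}).Reachable x y := by
  induction e with | h u v =>
  rcases hG.reachable_deleteEdges_or u v x with hx | hx <;>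
    rcases hG.reachable_deleteEdges_or u v y with hy | hy <;>
    rcases hG.reachable_deleteEdges_or u v z with hz | hz
  all_goals first
    | exact hx.trans hy.symm
    | exact absurd (hx.trans hz.symm) hxz
    | exact absurd (hy.trans hz.symm) hyz

theorem IsAcyclic.not_preconnected_deleteEdges (hG : G.IsAcyclic) {e : Sym2 V}
    (he : e ∈ G.edgeSet) : ¬(G.deleteEdges {e}).Preconnected := by
  induction e with | h u v =>
  exact fun h => isAcyclic_iff_forall_isBridge.mp hG he (h u v)

theorem reachable_sup_edge_eq_of_reachable {a b : V} (hab : G.Reachable a b) :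
    (G ⊔ edge a b).Reachable = G.Reachable := by
  refine le_antisymm ?_ fun x y h => h.mono le_sup_left
  rw [reachable_eq_reflTransGen, reachable_eq_reflTransGen]
  refine Relation.reflTransGen_closed fun x y hxy => ?_
  rw [← reachable_eq_reflTransGen]
  rw [sup_adj, edge_adj] at hxy
  rcases hxy with hxy | ⟨(⟨rfl, rfl⟩ | ⟨rfl, rfl⟩), -⟩
  · exact hxy.reachable
  · exact hab
  · exact hab.symm

theorem IsTree.connected_deleteEdges_sup_edge_iff (hG : G.IsTree) {e : Sym2 V}
    (he : e ∈ G.edgeSet) {a b : V} :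
    (G.deleteEdges {e} ⊔ edge a b).Connected ↔ ¬(G.deleteEdges {e}).Reachable a b := by
  refine ⟨fun h hab => hG.isAcyclic.not_preconnected_deleteEdges he ?_, fun hab => ?_⟩
  · rw [Preconnected, ← reachable_sup_edge_eq_of_reachable hab]
    exact h.preconnected
  have hb : ∀ x, (G.deleteEdges {e} ⊔ edge a b).Reachable x b := by
    intro x
    by_cases hxb : (G.deleteEdges {e}).Reachable x b
    · exact hxb.mono le_sup_left
    have hxa := hG.connected.preconnected.reachable_deleteEdges_of_not_reachable hxb hab
    have hadj : (edge a b).Adj a b := (edge_adj ..).2 ⟨.inl ⟨rfl, rfl⟩, fun h => hab (h ▸ .rfl)⟩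
    exact (hxa.mono le_sup_left).trans (hadj.reachable.mono le_sup_right)
  have : Nonempty V := ⟨a⟩
  exact ⟨fun x y => (hb x).trans (hb y).symm⟩

theorem Reachable.reachable_deleteEdges_of_not_reachable {e : Sym2 V} {w w' y z : V}
    (h : G.Reachable w w') (hwy : ¬(G.deleteEdges {e}).Reachable w y)
    (hw'y : ¬(G.deleteEdges {e}).Reachable w' y) : (G.deleteEdges {s(y, z)}).Reachable w w' := by
  classical
  obtain ⟨p, hp⟩ := h.exists_isPath
  have hy : y ∉ p.support := fun hy => hp.isTrail.disjoint_edges_takeUntil_dropUntil hy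
    ((p.takeUntil y hy).mem_edges_of_not_reachable_deleteEdges hwy)
    (by simpa using (p.dropUntil y hy).reverse.mem_edges_of_not_reachable_deleteEdges hw'y)
  refine ⟨p.toDeleteEdges _ ?_⟩
  rintro _ he rfl
  exact hy (p.fst_mem_support_of_mem_edges he)

def farSide (G : SimpleGraph V) (e : Sym2 V) (r : V) : Set V :=
  {w | ¬(G.deleteEdges {e}).Reachable w r}

theorem notMem_farSide_self (e : Sym2 V) (r : V) : r ∉ G.farSide e r := fun h => h .rfl

theorem Preconnected.farSide_subset_or_subset (hG : G.Preconnected) (e e' : Sym2 V) (r : V)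
    (h : (G.farSide e r ∩ G.farSide e' r).Nonempty) :
    G.farSide e r ⊆ G.farSide e' r ∨ G.farSide e' r ⊆ G.farSide e r := by
  induction e' with | h y z =>
  obtain ⟨x, hx, hx'⟩ := h
  by_contra! ⟨hsub, hsub'⟩
  obtain ⟨w, hw, hw₁⟩ := Set.not_subset.1 hsub
  obtain ⟨w', hw', hw'₁⟩ := Set.not_subset.1 hsub'
  by_cases hy : (G.deleteEdges {e}).Reachable y r
  · exact hx' (((hG x w).reachable_deleteEdges_of_not_reachable
      (fun h => hx (h.trans hy)) (fun h => hw (h.trans hy))).trans (not_not.1 hw₁))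
  · exact hw' ((hG w' r).reachable_deleteEdges_of_not_reachable
      (fun h => hy (h.symm.trans (not_not.1 hw'₁))) (fun h => hy h.symm))

theorem Preconnected.crosses_farSide_iff (hG : G.Preconnected) {e : Sym2 V} {a b r : V} :
    s(a, b).Crosses (G.farSide e r) ↔ ¬(G.deleteEdges {e}).Reachable a b := by
  rw [Sym2.crosses_mk_iff]
  refine ⟨fun h hab => h ⟨fun ha hb => ha (hab.trans hb), fun hb ha => hb (hab.symm.trans ha)⟩,
    fun hab h => ?_⟩
  by_cases ha : (G.deleteEdges {e}).Reachable a r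
  · exact hab (ha.trans (not_not.1 fun hb => h.2 hb ha).symm)
  · exact hab (hG.reachable_deleteEdges_of_not_reachable ha (h.1 ha))

theorem IsTree.connected_deleteEdges_sup_iff_crosses (hG : G.IsTree) {e : Sym2 V}
    (he : e ∈ G.edgeSet) (r : V) (s : Sym2 V) :
    (G.deleteEdges {e} ⊔ fromEdgeSet {s}).Connected ↔ s.Crosses (G.farSide e r) := by
  induction s with | h a b =>
  rw [hG.connected.preconnected.crosses_farSide_iff]
  exact hG.connected_deleteEdges_sup_edge_iff he

end SimpleGraph

open SimpleGraph in
/-- There is no finite connected simple graph `G` with spanning tree edge set `T`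
whose non-tree edges are exactly four distinct edges `s₁, s₂, s₃, s₄` and which has
four distinct tree edges `f₁, f₂, f₃, f₄` whose sets of covering non-tree edges are
`{s₁,s₂,s₃}`, `{s₁,s₄}`, `{s₂,s₄}`, `{s₃,s₄}` respectively.  (A non-tree edge `s`
covers a tree edge `e` iff `(T∖{e}) ∪ {s}` spans a connected graph.) -/
theorem stmt_1 :
    ¬ ∃ (V : Type) (G : SimpleGraph V) (T : Set (Sym2 V))
        (s₁ s₂ s₃ s₄ f₁ f₂ f₃ f₄ : Sym2 V),
      Finite V ∧ G.Connected ∧ T ⊆ G.edgeSet ∧ (SimpleGraph.fromEdgeSet T).IsTree ∧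
      G.edgeSet \ T = {s₁, s₂, s₃, s₄} ∧
      s₁ ≠ s₂ ∧ s₁ ≠ s₃ ∧ s₁ ≠ s₄ ∧ s₂ ≠ s₃ ∧ s₂ ≠ s₄ ∧ s₃ ≠ s₄ ∧
      f₁ ∈ T ∧ f₂ ∈ T ∧ f₃ ∈ T ∧ f₄ ∈ T ∧
      f₁ ≠ f₂ ∧ f₁ ≠ f₃ ∧ f₁ ≠ f₄ ∧ f₂ ≠ f₃ ∧ f₂ ≠ f₄ ∧ f₃ ≠ f₄ ∧
      {s ∈ G.edgeSet \ T | (SimpleGraph.fromEdgeSet ((T \ {f₁}) ∪ {s})).Connected}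
        = {s₁, s₂, s₃} ∧
      {s ∈ G.edgeSet \ T | (SimpleGraph.fromEdgeSet ((T \ {f₂}) ∪ {s})).Connected}
        = {s₁, s₄} ∧
      {s ∈ G.edgeSet \ T | (SimpleGraph.fromEdgeSet ((T \ {f₃}) ∪ {s})).Connected}
        = {s₂, s₄} ∧
      {s ∈ G.edgeSet \ T | (SimpleGraph.fromEdgeSet ((T \ {f₄}) ∪ {s})).Connected}
        = {s₃, s₄} := by
  rintro ⟨V, G, T, s₁, s₂, s₃, ⟨r, b⟩, f₁, f₂, f₃, f₄, -, -, hTG, hT, hN, h₁₂, h₁₃, h₁₄, h₂₃, h₂₄,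
    h₃₄, hf₁, hf₂, hf₃, hf₄, -, -, -, -, -, -, hc₁, hc₂, hc₃, hc₄⟩
  have hcover : ∀ f ∈ T, {s ∈ G.edgeSet \ T | (fromEdgeSet ((T \ {f}) ∪ {s})).Connected} =
      {s ∈ ({s₁, s₂, s₃, s(r, b)} : Set (Sym2 V)) | s.Crosses ((fromEdgeSet T).farSide f r)} := by
    intro f hf
    have hfT : f ∈ (fromEdgeSet T).edgeSet := by
      rw [edgeSet_fromEdgeSet]
      exact ⟨hf, G.not_isDiag_of_mem_edgeSet (hTG hf)⟩
    simp only [hN, fromEdgeSet_union, ← deleteEdges_fromEdgeSet,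
      hT.connected_deleteEdges_sup_iff_crosses hfT r]
  rw [hcover f₁ hf₁] at hc₁
  rw [hcover f₂ hf₂] at hc₂
  rw [hcover f₃ hf₃] at hc₃
  rw [hcover f₄ hf₄] at hc₄
  exact Sym2.false_of_laminar_crossings (hT.connected.preconnected.farSide_subset_or_subset · · r)
    (notMem_farSide_self · r) h₁₂ h₁₃ h₁₄ h₂₃ h₂₄ h₃₄ hc₁ hc₂ hc₃ hc₄
end

section
/- For every positive integer t and every real number p with 0 < p ≤ 1, one has ∑_{i=1}^{t} i^p ≤ (p/(p+1)) · (t^p (t+1)^p) / ((t+1)^p − t^p). -/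
/-!
Let `B(x) = p/(p+1) · x^p (x+1)^p / ((x+1)^p - x^p)`. Since `B(0) = 0`, it suffices to show
`B(x) + (x+1)^p ≤ B(x+1)` for `x ≥ 0`. Dividing by `(x+1)^p` and putting `s = 1/(x+1) ∈ (0,1]`,
this becomes `(1-s)^p + (1+s)^p - (1-p)(1-s)^p(1+s)^p ≤ 1+p`, an equality at `s = 0`.
The left side decreases in `s`: with `q = 1-p`, its derivative has the sign of
`(1-s)^q + 2qs - (1+s)^q`, which vanishes at `s = 0` and decreases since
`(1-s)^(q-1) + (1+s)^(q-1) ≥ 2` by AM-GM, as `(1-s)(1+s) ≤ 1`.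
-/

open Real Set

lemma two_le_rpow_add_rpow {a b r : ℝ} (ha : 0 < a) (hb : 0 < b) (hab : a * b ≤ 1) (hr : r ≤ 0) :
    2 ≤ a ^ r + b ^ r := by
  have h : 1 ^ 2 ≤ a ^ r * b ^ r := by
    rw [one_pow, ← mul_rpow ha.le hb.le]
    exact one_le_rpow_of_pos_of_le_one_of_nonpos (mul_pos ha hb) hab hr
  simpa using two_mul_le_add_of_sq_le_mul (rpow_nonneg ha.le r) (rpow_nonneg hb.le r) h

lemma hasDerivAt_one_add_rpow {x : ℝ} (hx : -1 < x) (q : ℝ) :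
    HasDerivAt (fun y ↦ (1 + y) ^ q) (q * (1 + x) ^ (q - 1)) x := by
  simpa using ((hasDerivAt_id x).const_add 1).rpow_const (p := q) (Or.inl (by dsimp; linarith))

lemma hasDerivAt_one_sub_rpow {x : ℝ} (hx : x < 1) (q : ℝ) :
    HasDerivAt (fun y ↦ (1 - y) ^ q) (-(q * (1 - x) ^ (q - 1))) x := by
  simpa using ((hasDerivAt_id x).const_sub 1).rpow_const (p := q) (Or.inl (by dsimp; linarith))

lemma one_sub_rpow_add_le_one_add_rpow {q s : ℝ} (hq0 : 0 ≤ q) (hq1 : q ≤ 1) (hs0 : 0 ≤ s)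
    (hs1 : s < 1) : (1 - s) ^ q + 2 * q * s ≤ (1 + s) ^ q := by
  let G : ℝ → ℝ := fun x ↦ (1 + x) ^ q - (1 - x) ^ q - 2 * q * x
  have hG : ∀ x ∈ Ioo (-1 : ℝ) 1,
      HasDerivAt G (q * ((1 + x) ^ (q - 1) + (1 - x) ^ (q - 1) - 2)) x := fun x hx ↦
    (((hasDerivAt_one_add_rpow hx.1 q).sub (hasDerivAt_one_sub_rpow hx.2 q)).sub
      ((hasDerivAt_id x).const_mul (2 * q))).congr_deriv (by ring)
  have hsub : Ico (0 : ℝ) 1 ⊆ Ioo (-1) 1 := fun x hx ↦ ⟨by linarith [hx.1], hx.2⟩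
  have hmono : MonotoneOn G (Ico 0 1) := by
    refine monotoneOn_of_hasDerivWithinAt_nonneg (convex_Ico 0 1)
      (fun x hx ↦ (hG x (hsub hx)).continuousAt.continuousWithinAt)
      (fun x hx ↦ (hG x (hsub (interior_subset hx))).hasDerivWithinAt) fun x hx ↦ ?_
    rw [interior_Ico] at hx
    refine mul_nonneg hq0 (sub_nonneg.2 (two_le_rpow_add_rpow ?_ ?_ ?_ (by linarith)))
    all_goals nlinarith [hx.1, hx.2]
  have := hmono ⟨le_rfl, one_pos⟩ ⟨hs0, hs1⟩ hs0
  simp only [G, add_zero, sub_zero, one_rpow, mul_zero, sub_self] at this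
  linarith

lemma one_add_rpow_add_mul_le_one_sub_rpow {p x : ℝ} (hp0 : 0 ≤ p) (hp1 : p ≤ 1) (hx0 : 0 ≤ x)
    (hx1 : x < 1) :
    (1 + x) ^ (p - 1) + 2 * (1 - p) * x * ((1 - x) ^ (p - 1) * (1 + x) ^ (p - 1))
      ≤ (1 - x) ^ (p - 1) := by
  have h1 : (0 : ℝ) < 1 - x := by linarith
  have h2 : (0 : ℝ) < 1 + x := by linarith
  have hA : (1 - x) ^ (1 - p) * (1 - x) ^ (p - 1) = 1 := by
    rw [← rpow_add h1]; norm_num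
  have hB : (1 + x) ^ (1 - p) * (1 + x) ^ (p - 1) = 1 := by
    rw [← rpow_add h2]; norm_num
  have key := one_sub_rpow_add_le_one_add_rpow (q := 1 - p) (by linarith) (by linarith) hx0 hx1
  set A := (1 - x) ^ (p - 1)
  set B := (1 + x) ^ (p - 1)
  calc B + 2 * (1 - p) * x * (A * B) = A * B * ((1 - x) ^ (1 - p) + 2 * (1 - p) * x) := by
        linear_combination (-B) * hA
    _ ≤ A * B * (1 + x) ^ (1 - p) := mul_le_mul_of_nonneg_left key (by positivity)
    _ = A := by linear_combination A * hB

lemma one_sub_rpow_add_one_add_rpow_le {p s : ℝ} (hp0 : 0 ≤ p) (hp1 : p ≤ 1) (hs0 : 0 ≤ s)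
    (hs1 : s ≤ 1) : (1 - s) ^ p + (1 + s) ^ p - (1 - p) * ((1 - s) ^ p * (1 + s) ^ p) ≤ 1 + p := by
  let F : ℝ → ℝ := fun x ↦ (1 - x) ^ p + (1 + x) ^ p - (1 - p) * ((1 - x) ^ p * (1 + x) ^ p)
  let F' : ℝ → ℝ := fun x ↦ -(p * (1 - x) ^ (p - 1)) + p * (1 + x) ^ (p - 1)
      - (1 - p) * (-(p * (1 - x) ^ (p - 1)) * (1 + x) ^ p + (1 - x) ^ p * (p * (1 + x) ^ (p - 1)))
  have hF : ∀ x ∈ Ioo (-1 : ℝ) 1, HasDerivAt F (F' x) x := fun x hx ↦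
    ((hasDerivAt_one_sub_rpow hx.2 p).add (hasDerivAt_one_add_rpow hx.1 p)).sub
      (((hasDerivAt_one_sub_rpow hx.2 p).mul (hasDerivAt_one_add_rpow hx.1 p)).const_mul (1 - p))
  have hcont : ContinuousOn F (Icc 0 1) := by
    have := continuous_rpow_const hp0
    fun_prop
  have hanti : AntitoneOn F (Icc 0 1) := by
    refine antitoneOn_of_hasDerivWithinAt_nonpos (f' := F') (convex_Icc 0 1) hcont
      (fun x hx ↦ ?_) fun x hx ↦ ?_
    · rw [interior_Icc] at hx
      exact (hF x ⟨by linarith [hx.1], hx.2⟩).hasDerivWithinAt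
    rw [interior_Icc] at hx
    obtain ⟨hx0, hx1⟩ := hx
    have h1 : (0 : ℝ) < 1 - x := by linarith
    have h2 : (0 : ℝ) < 1 + x := by linarith
    have hA : (1 - x) ^ p = (1 - x) * (1 - x) ^ (p - 1) := by
      rw [rpow_sub_one h1.ne', mul_div_cancel₀ _ h1.ne']
    have hB : (1 + x) ^ p = (1 + x) * (1 + x) ^ (p - 1) := by
      rw [rpow_sub_one h2.ne', mul_div_cancel₀ _ h2.ne']
    have hsign := one_add_rpow_add_mul_le_one_sub_rpow hp0 hp1 hx0.le hx1
    simp only [F']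
    rw [hA, hB]
    nlinarith [mul_le_mul_of_nonneg_left hsign hp0]
  have := hanti ⟨le_rfl, zero_le_one⟩ ⟨hs0, hs1⟩ hs0
  simp only [F, sub_zero, add_zero, one_rpow, mul_one] at this
  linarith

noncomputable def powSumBound (p x : ℝ) : ℝ :=
  p / (p + 1) * (x ^ p * (x + 1) ^ p) / ((x + 1) ^ p - x ^ p)

lemma powSumBound_zero {p : ℝ} (hp : p ≠ 0) : powSumBound p 0 = 0 := by
  simp [powSumBound, zero_rpow hp]

lemma powSumBound_add_rpow_le {p x : ℝ} (hp0 : 0 < p) (hp1 : p ≤ 1) (hx : 0 ≤ x) :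
    powSumBound p x + (x + 1) ^ p ≤ powSumBound p (x + 1) := by
  have hy : 0 < x + 1 := by linarith
  set s := 1 / (x + 1)
  have hs0 : 0 < s := by positivity
  have hs1 : s ≤ 1 := by rw [div_le_one hy]; linarith
  have hs : (x + 1) * s = 1 := mul_one_div_cancel hy.ne'
  set Y := (x + 1) ^ p
  set u := (1 - s) ^ p
  set v := (1 + s) ^ p
  have hY : 0 < Y := rpow_pos_of_pos hy p
  have hu0 : 0 ≤ u := rpow_nonneg (by linarith) p
  have hu1 : u < 1 := rpow_lt_one (by linarith) (by linarith) hp0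
  have hv1 : 1 < v := one_lt_rpow (by linarith) hp0
  have hxu : x ^ p = Y * u := by
    rw [← mul_rpow hy.le (by linarith)]
    congr 1
    linear_combination hs
  have hxv : (x + 1 + 1) ^ p = Y * v := by
    rw [← mul_rpow hy.le (by linarith)]
    congr 1
    linear_combination -hs
  have key := one_sub_rpow_add_one_add_rpow_le hp0.le hp1 hs0.le hs1
  have hu : 0 < 1 - u := by linarith
  have hv : 0 < v - 1 := by linarith
  unfold powSumBound
  rw [hxu, hxv, ← sub_nonneg]
  have hdiff : p / (p + 1) * (Y * (Y * v)) / (Y * v - Y)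
        - (p / (p + 1) * (Y * u * Y) / (Y - Y * u) + Y)
      = Y * (1 + p - (u + v - (1 - p) * (u * v)))
        / ((p + 1) * ((1 - u) * (v - 1))) := by
    rw [show Y * v - Y = Y * (v - 1) by ring, show Y - Y * u = Y * (1 - u) by ring]
    field_simp
    ring
  rw [hdiff]
  exact div_nonneg (mul_nonneg hY.le (by linarith)) (by positivity)

lemma sum_Icc_rpow_le_powSumBound {p : ℝ} (hp0 : 0 < p) (hp1 : p ≤ 1) (t : ℕ) :
    ∑ i ∈ Finset.Icc 1 t, (i : ℝ) ^ p ≤ powSumBound p t := by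
  induction t with
  | zero => simp [powSumBound_zero hp0.ne']
  | succ n ih =>
    rw [Finset.sum_Icc_succ_top (by omega), Nat.cast_succ]
    exact (add_le_add_left ih _).trans (powSumBound_add_rpow_le hp0 hp1 n.cast_nonneg)

theorem stmt_3_general (t : ℕ) (p : ℝ) (hp0 : 0 < p) (hp1 : p ≤ 1) :
    ∑ i ∈ Finset.Icc 1 t, (i : ℝ) ^ p ≤
      (p / (p + 1)) * ((t : ℝ) ^ p * ((t : ℝ) + 1) ^ p) / (((t : ℝ) + 1) ^ p - (t : ℝ) ^ p) :=
  sum_Icc_rpow_le_powSumBound hp0 hp1 t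

/-- For every positive integer `t` and real `0 < p ≤ 1`,
`∑_{i=1}^{t} i^p ≤ (p/(p+1)) · t^p (t+1)^p / ((t+1)^p − t^p)`. -/
theorem stmt_3 (t : ℕ) (ht : 1 ≤ t) (p : ℝ) (hp0 : 0 < p) (hp1 : p ≤ 1) :
    ∑ i ∈ Finset.Icc 1 t, (i : ℝ) ^ p ≤
      (p / (p + 1)) * ((t : ℝ) ^ p * ((t : ℝ) + 1) ^ p) / (((t : ℝ) + 1) ^ p - (t : ℝ) ^ p) :=
  stmt_3_general t p hp0 hp1
end

section
/- Let q ∈ (−1, 0], let v ≥ 1 be a real number, and let u ∈ (0, v). Then ∫_u^v x^q dx ≤ (v − u) · u^{q/2} · v^{q/2}. -/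
/-!
With `s = q + 1 ∈ (0, 1]` the integral is `(v ^ s - u ^ s) / s`. Writing `u = exp (m - t)` and
`v = exp (m + t)`, both `v ^ s - u ^ s` and `s` times the right-hand side carry the common factor
`2 * exp (s * m)`, and what remains is `sinh (s * t) ≤ s * sinh t` for `t ≥ 0`: this holds because
`sinh` is convex on `[0, ∞)` and vanishes at `0`.
-/

open Real Set

theorem convexOn_sinh_Ici : ConvexOn ℝ (Ici 0) sinh := by
  refine MonotoneOn.convexOn_of_deriv (convex_Ici 0) continuous_sinh.continuousOn
    differentiable_sinh.differentiableOn ?_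
  rw [Real.deriv_sinh, interior_Ici]
  intro x hx y hy hxy
  rw [cosh_le_cosh, abs_of_pos hx, abs_of_pos hy]
  exact hxy

theorem sinh_mul_le_mul_sinh {s t : ℝ} (hs0 : 0 ≤ s) (hs1 : s ≤ 1) (ht : 0 ≤ t) :
    sinh (s * t) ≤ s * sinh t := by
  simpa [smul_eq_mul, mul_comm] using
    convexOn_sinh_Ici.2 (mem_Ici.2 ht) (mem_Ici.2 le_rfl) hs0 (sub_nonneg.2 hs1) (by ring)

theorem rpow_add_one_sub_rpow_add_one_le {q u v : ℝ} (hq1 : -1 ≤ q) (hq0 : q ≤ 0)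
    (hu : 0 < u) (huv : u ≤ v) :
    v ^ (q + 1) - u ^ (q + 1) ≤ (q + 1) * ((v - u) * u ^ (q / 2) * v ^ (q / 2)) := by
  obtain ⟨m, t, ht, rfl, rfl⟩ : ∃ m t, 0 ≤ t ∧ u = exp (m - t) ∧ v = exp (m + t) := by
    refine ⟨(log u + log v) / 2, (log v - log u) / 2, ?_, ?_, ?_⟩
    · linarith [log_le_log hu huv]
    · rw [show (log u + log v) / 2 - (log v - log u) / 2 = log u by ring, exp_log hu]
    · rw [show (log u + log v) / 2 + (log v - log u) / 2 = log v by ring,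
        exp_log (hu.trans_le huv)]
  simp only [← exp_mul]
  have hL : exp ((m + t) * (q + 1)) - exp ((m - t) * (q + 1))
      = 2 * exp ((q + 1) * m) * sinh ((q + 1) * t) := by
    rw [sinh_eq, show (m + t) * (q + 1) = (q + 1) * m + (q + 1) * t by ring,
      show (m - t) * (q + 1) = (q + 1) * m + -((q + 1) * t) by ring, exp_add, exp_add]
    ring
  have hR : (exp (m + t) - exp (m - t)) * exp ((m - t) * (q / 2)) * exp ((m + t) * (q / 2))
      = 2 * exp ((q + 1) * m) * sinh t := by
    rw [mul_assoc, ← exp_add,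
      show (q + 1) * m = m + ((m - t) * (q / 2) + (m + t) * (q / 2)) by ring]
    generalize (m - t) * (q / 2) + (m + t) * (q / 2) = w
    rw [sinh_eq, exp_add m w, exp_add m t, exp_sub, exp_neg]
    ring
  rw [hL, hR, mul_left_comm]
  gcongr
  exact sinh_mul_le_mul_sinh (by linarith) (by linarith) ht

theorem stmt_4_general (q : ℝ) (hq1 : -1 < q) (hq0 : q ≤ 0) (v : ℝ)
    (u : ℝ) (hu0 : 0 < u) (huv : u < v) :
    ∫ x in u..v, x ^ q ≤ (v - u) * u ^ (q / 2) * v ^ (q / 2) := by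
  rw [integral_rpow (Or.inl hq1), div_le_iff₀ (by linarith), mul_comm]
  exact rpow_add_one_sub_rpow_add_one_le hq1.le hq0 hu0 huv.le

/-- For `q ∈ (−1, 0]`, `v ≥ 1`, and `u ∈ (0, v)`,
`∫_u^v x^q dx ≤ (v − u) · u^{q/2} · v^{q/2}`. -/
theorem stmt_4 (q : ℝ) (hq1 : -1 < q) (hq0 : q ≤ 0) (v : ℝ) (hv : 1 ≤ v)
    (u : ℝ) (hu0 : 0 < u) (huv : u < v) :
    ∫ x in u..v, x ^ q ≤ (v - u) * u ^ (q / 2) * v ^ (q / 2) :=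
  stmt_4_general q hq1 hq0 v u hu0 huv
end

section
/- Let c ≥ 3 be an integer, set p = 2/(c−1), and let t' ≥ 1 be an integer. Then the series ∑_{t=t'}^{∞} 1/S_p(t) converges, and (2c/(c+1)) · (t')^p · ∑_{t=t'}^{∞} 1/S_p(t) > c · (t'/(t'+1))^p. Moreover c · (t'/(t'+1))^p > 1, so the left-hand side is strictly greater than 1. -/
/-!
Comparing `S_p(t)` with integrals of the increasing function `x ↦ x ^ p` gives
`t ^ (p + 1) / (p + 1) ≤ S_p(t) < (t + 1) ^ (p + 1) / (p + 1)`. The lower bound makes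
`1 / S_p(t) = O(t ^ (-(p + 1)))` summable. The upper bound, together with the integral comparison
`∑_{t ≥ t'} (t + 1) ^ (-(p + 1)) ≥ ∫_{t' + 1}^∞ x ^ (-(p + 1)) dx`, gives
`∑_{t ≥ t'} 1 / S_p(t) > (p + 1) / p · (t' + 1) ^ (-p)`, and for `p = 2 / (c - 1)` the factor
`(p + 1) / p` is `(c + 1) / 2`. Finally `p ≤ 1` gives `(t' / (t' + 1)) ^ p ≥ t' / (t' + 1) ≥ 1 / 2`.
-/

open Finset Real Filter Set

noncomputable def powerSum (p : ℝ) (t : ℕ) : ℝ := ∑ i ∈ Icc 1 t, (i : ℝ) ^ p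

section

variable {p : ℝ}

theorem powerSum_eq_sum_range (p : ℝ) (t : ℕ) :
    powerSum p t = ∑ i ∈ range t, (1 + (i : ℝ)) ^ p := by
  rw [powerSum, ← Finset.Ico_add_one_right_eq_Icc, sum_Ico_eq_sum_range]
  simp [add_comm]

theorem powerSum_le (hp : 0 ≤ p) (t : ℕ) :
    powerSum p t ≤ ((1 + (t : ℝ)) ^ (p + 1) - 1) / (p + 1) := by
  have hmono : MonotoneOn (fun x : ℝ => x ^ p) (Icc 1 (1 + t)) := fun x hx y _ hxy =>
    rpow_le_rpow (zero_le_one.trans hx.1) hxy hp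
  have := hmono.sum_le_integral
  rwa [integral_rpow (Or.inl (by linarith)), one_rpow, ← powerSum_eq_sum_range] at this

theorem div_le_powerSum (hp : 0 ≤ p) (t : ℕ) : (t : ℝ) ^ (p + 1) / (p + 1) ≤ powerSum p t := by
  have hmono : MonotoneOn (fun x : ℝ => x ^ p) (Icc 0 (0 + t)) := fun x hx y _ hxy =>
    rpow_le_rpow hx.1 hxy hp
  have := hmono.integral_le_sum
  rw [integral_rpow (Or.inl (by linarith)), zero_rpow (by linarith), zero_add, sub_zero] at this
  simpa [powerSum_eq_sum_range, add_comm] using this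

theorem powerSum_pos {t : ℕ} (ht : 1 ≤ t) : 0 < powerSum p t :=
  sum_pos (fun i hi => rpow_pos_of_pos (Nat.cast_pos.2 (mem_Icc.1 hi).1) p) ⟨1, by simp [ht]⟩

theorem one_div_powerSum_le (hp : 0 ≤ p) (t : ℕ) :
    1 / powerSum p t ≤ (p + 1) * (t : ℝ) ^ (-(p + 1)) := by
  rcases Nat.eq_zero_or_pos t with rfl | ht
  · rw [Nat.cast_zero, zero_rpow (by linarith)]
    simp [powerSum]
  have hpos : 0 < (t : ℝ) ^ (p + 1) / (p + 1) := by positivity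
  calc 1 / powerSum p t ≤ 1 / ((t : ℝ) ^ (p + 1) / (p + 1)) :=
        one_div_le_one_div_of_le hpos (div_le_powerSum hp t)
    _ = (p + 1) * (t : ℝ) ^ (-(p + 1)) := by rw [one_div_div, rpow_neg (by positivity)]; rfl

theorem mul_rpow_neg_lt_one_div_powerSum (hp : 0 ≤ p) {t : ℕ} (ht : 1 ≤ t) :
    (p + 1) * (1 + (t : ℝ)) ^ (-(p + 1)) < 1 / powerSum p t := by
  have hlt : powerSum p t < (1 + (t : ℝ)) ^ (p + 1) / (p + 1) :=
    (powerSum_le hp t).trans_lt (div_lt_div_of_pos_right (by linarith) (by linarith))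
  calc (p + 1) * (1 + (t : ℝ)) ^ (-(p + 1)) = 1 / ((1 + (t : ℝ)) ^ (p + 1) / (p + 1)) := by
        rw [one_div_div, rpow_neg (by positivity)]; rfl
    _ < 1 / powerSum p t := one_div_lt_one_div_of_lt (powerSum_pos ht) hlt

theorem summable_one_div_powerSum (hp : 0 < p) : Summable fun t => 1 / powerSum p t :=
  .of_nonneg_of_le (fun t => one_div_nonneg.2 (by rw [powerSum]; positivity))
    (one_div_powerSum_le hp.le) ((summable_nat_rpow.2 (by linarith)).mul_left (p + 1))

theorem div_mul_rpow_neg_lt_tsum_one_div_powerSum (hp : 0 < p) {n : ℕ} (hn : 1 ≤ n) :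
    (p + 1) / p * (1 + (n : ℝ)) ^ (-p) < ∑' k, 1 / powerSum p (n + k) := by
  have hsum : Summable fun k : ℕ => (k : ℝ) ^ (-(p + 1)) := summable_nat_rpow.2 (by linarith)
  have hcast (k : ℕ) : ((k + (n + 1) : ℕ) : ℝ) = 1 + ((n + k : ℕ) : ℝ) := by push_cast; ring
  have hintegral :
      (1 + (n : ℝ)) ^ (-p) / p ≤ ∑' k : ℕ, (1 + ((n + k : ℕ) : ℝ)) ^ (-(p + 1)) := by
    have anti : AntitoneOn (fun x : ℝ => x ^ (-(p + 1))) (Ici ((n + 1 : ℕ) : ℝ)) :=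
      fun x hx y _ hxy =>
        rpow_le_rpow_of_nonpos ((by positivity : (0 : ℝ) < _).trans_le hx) hxy (by linarith)
    have := anti.integral_le_tsum_comp_add (n + 1) hsum fun x hx =>
      rpow_nonneg ((by positivity : (0 : ℝ) < _).trans hx).le _
    rw [integral_Ioi_rpow_of_lt (by linarith) (by positivity)] at this
    simp only [hcast] at this
    convert this using 1
    push_cast
    ring_nf
  have hg : Summable fun k : ℕ => (1 + ((n + k : ℕ) : ℝ)) ^ (-(p + 1)) := by
    simpa only [hcast] using (summable_nat_add_iff (n + 1)).2 hsum
  calc (p + 1) / p * (1 + (n : ℝ)) ^ (-p) = (p + 1) * ((1 + (n : ℝ)) ^ (-p) / p) := by ring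
    _ ≤ (p + 1) * ∑' k : ℕ, (1 + ((n + k : ℕ) : ℝ)) ^ (-(p + 1)) := by gcongr
    _ = ∑' k : ℕ, (p + 1) * (1 + ((n + k : ℕ) : ℝ)) ^ (-(p + 1)) := tsum_mul_left.symm
    _ < ∑' k, 1 / powerSum p (n + k) :=
      (hg.mul_left _).tsum_lt_tsum (fun k => (mul_rpow_neg_lt_one_div_powerSum hp.le (by omega)).le)
        (mul_rpow_neg_lt_one_div_powerSum hp.le (t := n + 0) hn)
        ((summable_one_div_powerSum hp).comp_injective (add_right_injective n))

end

/-- For integers `c ≥ 3`, `p = 2/(c−1)` and integer `t' ≥ 1`, with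
`S_p(t) = ∑_{i=1}^{t} i^p`: the series `∑_{t=t'}^{∞} 1/S_p(t)` converges,
`(2c/(c+1)) · (t')^p · ∑_{t=t'}^{∞} 1/S_p(t) > c · (t'/(t'+1))^p`, and
`c · (t'/(t'+1))^p > 1`. -/
theorem stmt_7 (c : ℕ) (hc : 3 ≤ c) (p : ℝ) (hp : p = 2 / ((c : ℝ) - 1))
    (t' : ℕ) (ht' : 1 ≤ t')
    (S : ℕ → ℝ) (hS : ∀ t : ℕ, S t = ∑ i ∈ Finset.Icc 1 t, (i : ℝ) ^ p) :
    Summable (fun t : ℕ => 1 / S (t' + t)) ∧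
      (2 * (c : ℝ) / ((c : ℝ) + 1)) * (t' : ℝ) ^ p * ∑' t : ℕ, 1 / S (t' + t) >
        (c : ℝ) * ((t' : ℝ) / ((t' : ℝ) + 1)) ^ p ∧
      (c : ℝ) * ((t' : ℝ) / ((t' : ℝ) + 1)) ^ p > 1 := by
  obtain rfl : S = powerSum p := funext hS
  have hc3 : (3 : ℝ) ≤ c := by exact_mod_cast hc
  have hp0 : 0 < p := by rw [hp]; exact div_pos two_pos (by linarith)
  have hp1 : p ≤ 1 := by rw [hp, div_le_one (by linarith)]; linarith
  have ht'1 : (1 : ℝ) ≤ t' := by exact_mod_cast ht'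
  refine ⟨(summable_one_div_powerSum hp0).comp_injective (add_right_injective t'), ?_, ?_⟩
  · have hratio : (p + 1) / p = ((c : ℝ) + 1) / 2 := by
      have hc1 : (c : ℝ) - 1 ≠ 0 := by linarith
      rw [hp]; field_simp; ring
    calc (c : ℝ) * ((t' : ℝ) / ((t' : ℝ) + 1)) ^ p
        = 2 * (c : ℝ) / ((c : ℝ) + 1) * (t' : ℝ) ^ p
            * ((p + 1) / p * (1 + (t' : ℝ)) ^ (-p)) := by
          rw [hratio, div_rpow (by linarith) (by linarith), rpow_neg (by linarith), add_comm 1]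
          field_simp
      _ < _ := by
          gcongr
          exact div_mul_rpow_neg_lt_tsum_one_div_powerSum hp0 ht'
  · have hhalf : (1 : ℝ) / 2 ≤ ((t' : ℝ) / ((t' : ℝ) + 1)) ^ p :=
      calc (1 : ℝ) / 2 ≤ (t' : ℝ) / ((t' : ℝ) + 1) := by
            rw [div_le_div_iff₀ two_pos (by linarith)]; linarith
        _ ≤ ((t' : ℝ) / ((t' : ℝ) + 1)) ^ p :=
            self_le_rpow_of_le_one (by positivity)
              (div_le_one_of_le₀ (by linarith) (by positivity)) hp1
    nlinarith
end

section
/- Let c ≥ 3 be an integer, let N ≥ 1 be an integer, and let z₁, …, z_N be nonnegative reals with ∑_{t=1}^{N} z_t ≥ c. For 1 ≤ t ≤ N+1 set Z_t = ∑_{i=1}^{t−1} z_i and p_t = (max(0, 1 − Z_t/c))^c. Then ∑_{t=1}^{N} z_t · (p_t + p_{t+1}) ≥ 2c/(c+1). -/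
/-!
Write `q t = max 0 (1 - Z_t / c)`, so that `p t = q t ^ c`. The step `t ↦ t + 1` decreases `q` by
at most `z_t / c`, and the trapezoid rule for the convex function `x ↦ x ^ c` on `[q (t+1), q t]`
bounds `(q t ^ (c+1) - q (t+1) ^ (c+1)) / (c+1)` by `(q t - q (t+1)) (p t + p (t+1)) / 2`. Hence each
summand dominates `2c/(c+1)` times the decrease of `q ^ (c+1)`, which telescopes from `q 1 = 1`
down to `q (N+1) = 0`.
-/

open Finset

lemma pow_mul_pow_add_pow_mul_pow_le {a b : ℝ} (hb : 0 ≤ b) (hba : b ≤ a) {i n : ℕ} (hi : i ≤ n) :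
    a ^ i * b ^ (n - i) + b ^ i * a ^ (n - i) ≤ a ^ n + b ^ n := by
  obtain ⟨k, rfl⟩ := Nat.exists_eq_add_of_le hi
  rw [Nat.add_sub_cancel_left, pow_add, pow_add]
  nlinarith [mul_nonneg (sub_nonneg.2 (pow_le_pow_left₀ hb hba i))
    (sub_nonneg.2 (pow_le_pow_left₀ hb hba k))]

lemma two_mul_pow_succ_sub_pow_succ_le {a b : ℝ} (hb : 0 ≤ b) (hba : b ≤ a) (n : ℕ) :
    2 * (a ^ (n + 1) - b ^ (n + 1)) ≤ (n + 1) * (a - b) * (a ^ n + b ^ n) := by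
  have hfactor := geom_sum₂_mul a b (n + 1)
  have hreflect := geom_sum₂_comm a b (n + 1)
  simp only [Nat.add_sub_cancel] at hfactor hreflect
  have hpairs : ∑ i ∈ range (n + 1), (a ^ i * b ^ (n - i) + b ^ i * a ^ (n - i))
      ≤ ∑ _i ∈ range (n + 1), (a ^ n + b ^ n) :=
    sum_le_sum fun i hi ↦ pow_mul_pow_add_pow_mul_pow_le hb hba (Nat.lt_succ_iff.1 (mem_range.1 hi))
  rw [sum_add_distrib, ← hreflect, sum_const, card_range, nsmul_eq_mul] at hpairs
  rw [← hfactor]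
  push_cast at hpairs
  nlinarith [sub_nonneg.2 hba]

lemma two_mul_div_mul_pow_succ_sub_pow_succ_le {a b w : ℝ} (hb : 0 ≤ b) (hba : b ≤ a) {n : ℕ}
    (hw : n * (a - b) ≤ w) :
    2 * n / (n + 1) * (a ^ (n + 1) - b ^ (n + 1)) ≤ w * (a ^ n + b ^ n) := by
  calc 2 * n / (n + 1) * (a ^ (n + 1) - b ^ (n + 1))
      = n / (n + 1) * (2 * (a ^ (n + 1) - b ^ (n + 1))) := by ring
    _ ≤ n / (n + 1) * ((n + 1) * (a - b) * (a ^ n + b ^ n)) :=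
        mul_le_mul_of_nonneg_left (two_mul_pow_succ_sub_pow_succ_le hb hba n) (by positivity)
    _ = n * (a - b) * (a ^ n + b ^ n) := by field_simp
    _ ≤ w * (a ^ n + b ^ n) :=
        mul_le_mul_of_nonneg_right hw (add_nonneg (pow_nonneg (hb.trans hba) n) (pow_nonneg hb n))

lemma antitone_max_zero_one_sub_div {c : ℝ} (hc : 0 ≤ c) :
    Antitone fun u : ℝ ↦ max 0 (1 - u / c) :=
  fun _ _ huv ↦ max_le_max le_rfl (sub_le_sub_left (div_le_div_of_nonneg_right huv hc) 1)

lemma mul_sub_max_zero_one_sub_div_le {c u v : ℝ} (hc : 0 < c) (huv : u ≤ v) :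
    c * (max 0 (1 - u / c) - max 0 (1 - v / c)) ≤ v - u := by
  have hlip : max 0 (1 - u / c) - max 0 (1 - v / c) ≤ (v - u) / c := by
    calc _ ≤ max (0 - 0) ((1 - u / c) - (1 - v / c)) := max_sub_max_le_max _ _ _ _
      _ = (v - u) / c := by
        rw [sub_self, max_eq_right (by rw [sub_sub_sub_cancel_left, ← sub_div]; positivity)]
        ring
  calc _ ≤ c * ((v - u) / c) := mul_le_mul_of_nonneg_left hlip hc.le
    _ = v - u := mul_div_cancel₀ _ hc.ne'

/-- Key convexity estimate: if `z₁,…,z_N ≥ 0` with `∑ z_t ≥ c`, and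
`Z_t = ∑_{i<t} z_i`, `p_t = (max(0, 1 − Z_t/c))^c`, then
`∑_{t=1}^{N} z_t (p_t + p_{t+1}) ≥ 2c/(c+1)`. -/
theorem stmt_8 (c : ℕ) (hc : 3 ≤ c) (N : ℕ) (hN : 1 ≤ N)
    (z : ℕ → ℝ) (hz : ∀ t ∈ Finset.Icc 1 N, 0 ≤ z t)
    (hsum : (c : ℝ) ≤ ∑ t ∈ Finset.Icc 1 N, z t)
    (Z : ℕ → ℝ) (hZ : ∀ t : ℕ, Z t = ∑ i ∈ Finset.Ico 1 t, z i)
    (p : ℕ → ℝ) (hp : ∀ t : ℕ, p t = (max 0 (1 - Z t / (c : ℝ))) ^ c) :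
    2 * (c : ℝ) / ((c : ℝ) + 1) ≤ ∑ t ∈ Finset.Icc 1 N, z t * (p t + p (t + 1)) := by
  have hc0 : (0 : ℝ) < c := Nat.cast_pos.2 (by omega)
  set q : ℕ → ℝ := fun t ↦ max 0 (1 - Z t / c)
  have hZ_succ : ∀ t ≥ 1, Z (t + 1) = Z t + z t := fun t ht ↦ by
    rw [hZ, hZ, sum_Ico_succ_top ht]
  have hq_one : q 1 = 1 := by simp [q, hZ]
  have hq_last : q (N + 1) = 0 := by
    refine max_eq_left (sub_nonpos.2 ((one_le_div hc0).2 ?_))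
    rwa [hZ, Ico_add_one_right_eq_Icc]
  have hstep : ∀ t ∈ Icc 1 N,
      2 * c / (c + 1) * (q t ^ (c + 1) - q (t + 1) ^ (c + 1)) ≤ z t * (p t + p (t + 1)) :=
    fun t ht ↦ by
      have hZ_le : Z t ≤ Z (t + 1) := by linarith [hZ_succ t (mem_Icc.1 ht).1, hz t ht]
      rw [hp, hp]
      refine two_mul_div_mul_pow_succ_sub_pow_succ_le (le_max_left _ _)
        (antitone_max_zero_one_sub_div hc0.le hZ_le) ?_
      linarith [mul_sub_max_zero_one_sub_div_le hc0 hZ_le, hZ_succ t (mem_Icc.1 ht).1]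
  calc 2 * (c : ℝ) / (c + 1) = 2 * c / (c + 1) * (q 1 ^ (c + 1) - q (N + 1) ^ (c + 1)) := by
        simp [hq_one, hq_last]
    _ = ∑ t ∈ Icc 1 N, 2 * c / (c + 1) * (q t ^ (c + 1) - q (t + 1) ^ (c + 1)) := by
        rw [← mul_sum, ← neg_sub, ← sum_Icc_sub hN fun t ↦ q t ^ (c + 1), ← sum_neg_distrib]
        simp only [neg_sub]
    _ ≤ _ := sum_le_sum hstep
end

section
/- Let G = (V,E) be a finite connected simple graph and let T ⊆ E be the edge set of a spanning tree of G. Let s_e, s_f ∈ E∖T be distinct non-tree edges and let e, f ∈ T be distinct tree edges such that both (T∖{e}) ∪ {s_e} and (T∖{f}) ∪ {s_f} are edge sets of spanning trees of G. If the spanning subgraph of G with edge set (T∖{e}) ∪ {s_f} is disconnected, or the spanning subgraph with edge set (T∖{f}) ∪ {s_e} is disconnected, then the spanning subgraph with edge set (T∖{e,f}) ∪ {s_e, s_f} is connected (and hence is a spanning tree of G). -/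
/-!
Write `F = T - e - f`, so that `T - e = F + f` and `T - f = F + e`. Since `T = (T - e) + e` is
connected but `T - e + s_f` is not, the ends of `s_f` are joined in `T - e = F + f`; since
`T - f + s_f` is a tree, they are not joined in `F`. Hence in `F` the two ends of `s_f` lie in the
components of the two ends of `f`. The ends of `s_e` are not joined in `F + f`, so `s_e` cannot
join these two components as well, and the ends of `s_f` stay separated in `F + s_e`. Finally
`F + s_e + f = T - e + s_e` is connected, so in `F + s_e` every vertex is joined to an end of `f`,
and adding `s_f`, which joins the two sides, connects everything.
-/

open SimpleGraph

namespace SimpleGraph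

variable {V : Type*} {G : SimpleGraph V} {a b c d x y : V}

lemma reachable_sup_edge : (G ⊔ edge x y).Reachable x y := by
  by_cases hxy : x = y
  · exact hxy ▸ .rfl
  · exact Adj.reachable (.inr ((edge_adj _ _ _ _).mpr ⟨.inl ⟨rfl, rfl⟩, hxy⟩))

theorem reachable_sup_edge_iff :
    (G ⊔ edge x y).Reachable a b ↔
      G.Reachable a b ∨ G.Reachable a x ∧ G.Reachable y b ∨
        G.Reachable a y ∧ G.Reachable x b := by
  constructor
  · rintro ⟨p⟩
    induction p with
    | nil => exact .inl .rfl
    | cons h _ ih =>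
      rcases (sup_adj _ _ _ _).mp h with h | h
      · rcases ih with h' | ⟨h₁, h₂⟩ | ⟨h₁, h₂⟩
        · exact .inl (h.reachable.trans h')
        · exact .inr (.inl ⟨h.reachable.trans h₁, h₂⟩)
        · exact .inr (.inr ⟨h.reachable.trans h₁, h₂⟩)
      · obtain ⟨⟨rfl, rfl⟩ | ⟨rfl, rfl⟩, -⟩ := (edge_adj _ _ _ _).mp h
        · rcases ih with h' | ⟨h₁, h₂⟩ | ⟨h₁, h₂⟩
          · exact .inr (.inl ⟨.rfl, h'⟩)
          · exact .inl (h₁.symm.trans h₂)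
          · exact .inl h₂
        · rcases ih with h' | ⟨h₁, h₂⟩ | ⟨h₁, h₂⟩
          · exact .inr (.inr ⟨.rfl, h'⟩)
          · exact .inl h₂
          · exact .inl (h₁.symm.trans h₂)
  · have hle : G ≤ G ⊔ edge x y := le_sup_left
    rintro (h | ⟨h₁, h₂⟩ | ⟨h₁, h₂⟩)
    · exact h.mono hle
    · exact (h₁.mono hle).trans (reachable_sup_edge.trans (h₂.mono hle))
    · exact (h₁.mono hle).trans (reachable_sup_edge.symm.trans (h₂.mono hle))

lemma Connected.reachable_or_reachable_of_sup_edge (h : (G ⊔ edge x y).Connected) (v : V) :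
    G.Reachable v x ∨ G.Reachable v y := by
  rcases reachable_sup_edge_iff.mp (h.preconnected v x) with h | ⟨h, -⟩ | ⟨h, -⟩
  exacts [.inl h, .inl h, .inr h]

theorem Connected.exchange_sup_edge (h : (G ⊔ edge x y).Connected) (hab : ¬ G.Reachable a b) :
    (G ⊔ edge a b).Connected := by
  have hle : G ≤ G ⊔ edge a b := le_sup_left
  have hxy : (G ⊔ edge a b).Reachable x y := by
    rcases h.reachable_or_reachable_of_sup_edge a with ha | ha <;>
      rcases h.reachable_or_reachable_of_sup_edge b with hb | hb
    · exact absurd (ha.trans hb.symm) hab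
    · exact (ha.symm.mono hle).trans (reachable_sup_edge.trans (hb.mono hle))
    · exact (hb.symm.mono hle).trans (reachable_sup_edge.symm.trans (ha.mono hle))
    · exact absurd (ha.trans hb.symm) hab
  refine (connected_iff_exists_forall_reachable _).mpr ⟨x, fun v => ?_⟩
  rcases h.reachable_or_reachable_of_sup_edge v with hv | hv
  · exact (hv.mono hle).symm
  · exact hxy.trans (hv.mono hle).symm

theorem not_reachable_sup_edge_of_separates (hab : (G ⊔ edge x y).Reachable a b)
    (hab' : ¬ G.Reachable a b) (hcd : ¬ (G ⊔ edge x y).Reachable c d) :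
    ¬ (G ⊔ edge c d).Reachable a b := by
  rw [reachable_sup_edge_iff] at hab hcd ⊢
  simp only [← ConnectedComponent.eq] at *
  grind

theorem connected_sup_edge_sup_edge_of_exchange {F : SimpleGraph V} {p q : V}
    (hT : (F ⊔ edge p q ⊔ edge x y).Connected)
    (hcd : ¬ (F ⊔ edge x y).Reachable c d) (h1 : (F ⊔ edge x y ⊔ edge c d).Connected)
    (hab : ¬ (F ⊔ edge p q).Reachable a b) (hdis : ¬ (F ⊔ edge x y ⊔ edge a b).Connected) :
    (F ⊔ edge c d ⊔ edge a b).Connected := by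
  have hab₁ : (F ⊔ edge x y).Reachable a b := by
    by_contra h
    exact hdis ((sup_right_comm F _ _ ▸ hT).exchange_sup_edge h)
  have hab₀ : ¬ F.Reachable a b := fun h => hab (h.mono le_sup_left)
  exact (sup_right_comm F _ _ ▸ h1).exchange_sup_edge
    (not_reachable_sup_edge_of_separates hab₁ hab₀ hcd)

section EdgeSets

variable {S : Set (Sym2 V)}

lemma fromEdgeSet_union_singleton (S : Set (Sym2 V)) (u v : V) :
    fromEdgeSet (S ∪ {s(u, v)}) = fromEdgeSet S ⊔ edge u v :=
  fromEdgeSet_union _ _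

lemma fromEdgeSet_union_pair (S : Set (Sym2 V)) (a b c d : V) :
    fromEdgeSet (S ∪ {s(a, b), s(c, d)}) = fromEdgeSet S ⊔ edge a b ⊔ edge c d := by
  rw [← Set.singleton_union, ← Set.union_assoc, fromEdgeSet_union_singleton,
    fromEdgeSet_union_singleton]

lemma fromEdgeSet_sdiff_singleton_sup_edge (h : s(x, y) ∈ S) :
    fromEdgeSet (S \ {s(x, y)}) ⊔ edge x y = fromEdgeSet S := by
  rw [← fromEdgeSet_union_singleton, Set.sdiff_union_of_subset (Set.singleton_subset_iff.mpr h)]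

lemma not_reachable_of_isAcyclic_fromEdgeSet_union_singleton
    (h : (fromEdgeSet (S ∪ {s(a, b)})).IsAcyclic) (hab : a ≠ b) (hs : s(a, b) ∉ S) :
    ¬ (fromEdgeSet S).Reachable a b := fun hr => by
  rw [fromEdgeSet_union_singleton, isAcyclic_sup_fromEdgeSet_iff] at h
  exact (h.2 hr).elim hab fun hadj => hs ((fromEdgeSet_adj _).mp hadj).1

theorem connected_fromEdgeSet_exchange {T : Set (Sym2 V)} {p q : V}
    (hT : (fromEdgeSet T).Connected) (he : s(p, q) ∈ T) (hf : s(x, y) ∈ T)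
    (hef : s(p, q) ≠ s(x, y)) (hse : s(c, d) ∉ T) (hcd : c ≠ d) (hsf : s(a, b) ∉ T)
    (hab : a ≠ b)
    (h1 : (fromEdgeSet (T \ {s(p, q)} ∪ {s(c, d)})).IsTree)
    (h2 : (fromEdgeSet (T \ {s(x, y)} ∪ {s(a, b)})).IsTree)
    (hdis : ¬ (fromEdgeSet (T \ {s(p, q)} ∪ {s(a, b)})).Connected) :
    (fromEdgeSet (T \ {s(p, q), s(x, y)} ∪ {s(c, d), s(a, b)})).Connected := by
  have hcd' := not_reachable_of_isAcyclic_fromEdgeSet_union_singleton h1.isAcyclic hcd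
    fun h => hse h.1
  have hab' := not_reachable_of_isAcyclic_fromEdgeSet_union_singleton h2.isAcyclic hab
    fun h => hsf h.1
  set F := fromEdgeSet (T \ {s(p, q), s(x, y)})
  have hTe : fromEdgeSet (T \ {s(p, q)}) = F ⊔ edge x y := by
    rw [← fromEdgeSet_sdiff_singleton_sup_edge (S := T \ {s(p, q)}) ⟨hf, hef.symm⟩,
      Set.sdiff_sdiff, Set.singleton_union]
  have hTf : fromEdgeSet (T \ {s(x, y)}) = F ⊔ edge p q := by
    rw [← fromEdgeSet_sdiff_singleton_sup_edge (S := T \ {s(x, y)}) ⟨he, hef⟩,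
      Set.sdiff_sdiff, Set.singleton_union, Set.pair_comm]
  rw [← fromEdgeSet_sdiff_singleton_sup_edge hf, hTf] at hT
  rw [fromEdgeSet_union_singleton, hTe] at h1 hdis
  rw [hTe] at hcd'
  rw [hTf] at hab'
  rw [fromEdgeSet_union_pair]
  exact connected_sup_edge_sup_edge_of_exchange hT hcd' h1.connected hab' hdis

end EdgeSets

end SimpleGraph

theorem stmt_13_general {V : Type} (G : SimpleGraph V)
    (T : Set (Sym2 V))
    (hTree : (SimpleGraph.fromEdgeSet T).IsTree)
    (se sf : Sym2 V) (hse : se ∈ G.edgeSet \ T) (hsf : sf ∈ G.edgeSet \ T)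
    (e f : Sym2 V) (he : e ∈ T) (hf : f ∈ T) (hef : e ≠ f)
    (h1 : (SimpleGraph.fromEdgeSet ((T \ {e}) ∪ {se})).IsTree)
    (h2 : (SimpleGraph.fromEdgeSet ((T \ {f}) ∪ {sf})).IsTree)
    (hdis : ¬ (SimpleGraph.fromEdgeSet ((T \ {e}) ∪ {sf})).Connected ∨
            ¬ (SimpleGraph.fromEdgeSet ((T \ {f}) ∪ {se})).Connected) :
    (SimpleGraph.fromEdgeSet ((T \ {e, f}) ∪ {se, sf})).Connected := by
  obtain ⟨p, q⟩ := e
  obtain ⟨x, y⟩ := f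
  obtain ⟨c, d⟩ := se
  obtain ⟨a, b⟩ := sf
  have hcd : c ≠ d := G.ne_of_adj hse.1
  have hab : a ≠ b := G.ne_of_adj hsf.1
  rcases hdis with hdis | hdis
  · exact connected_fromEdgeSet_exchange hTree.connected he hf hef hse.2 hcd hsf.2 hab h1 h2 hdis
  · rw [Set.pair_comm s(p, q), Set.pair_comm s(c, d)]
    exact connected_fromEdgeSet_exchange hTree.connected hf he hef.symm hsf.2 hab hse.2 hcd
      h2 h1 hdis

/-- Exchange lemma: if `T − e + s_e` and `T − f + s_f` are spanning trees, and
`T − e + s_f` is disconnected or `T − f + s_e` is disconnected, then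
`T − e − f + s_e + s_f` is connected. -/
theorem stmt_13 {V : Type} [Finite V] (G : SimpleGraph V) (hG : G.Connected)
    (T : Set (Sym2 V)) (hT : T ⊆ G.edgeSet)
    (hTree : (SimpleGraph.fromEdgeSet T).IsTree)
    (se sf : Sym2 V) (hse : se ∈ G.edgeSet \ T) (hsf : sf ∈ G.edgeSet \ T)
    (hsesf : se ≠ sf)
    (e f : Sym2 V) (he : e ∈ T) (hf : f ∈ T) (hef : e ≠ f)
    (h1 : (SimpleGraph.fromEdgeSet ((T \ {e}) ∪ {se})).IsTree)
    (h2 : (SimpleGraph.fromEdgeSet ((T \ {f}) ∪ {sf})).IsTree)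
    (hdis : ¬ (SimpleGraph.fromEdgeSet ((T \ {e}) ∪ {sf})).Connected ∨
            ¬ (SimpleGraph.fromEdgeSet ((T \ {f}) ∪ {se})).Connected) :
    (SimpleGraph.fromEdgeSet ((T \ {e, f}) ∪ {se, sf})).Connected :=
  stmt_13_general G T hTree se sf hse hsf e f he hf hef h1 h2 hdis
end

section
/- Let G = (V,E) be a finite connected simple graph and let T ⊆ E be the edge set of a spanning tree of G. Let e ∈ T and s_e ∈ E∖T be such that T' = (T∖{e}) ∪ {s_e} is again the edge set of a spanning tree of G. Let f ∈ T with f ≠ e (so f ∈ T ∩ T') and let s ∈ E∖T with s ≠ s_e (so s ∉ T'). Suppose that NOT (s_e covers f with respect to T and s covers e with respect to T), and also NOT (e covers f with respect to T' and s covers s_e with respect to T'). Then s covers f with respect to T if and only if s covers f with respect to T'. -/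
/-!
For a tree `R` and a tree edge `g = uv`, an edge `xy` covers `g` exactly when `x` and `y` lie in
different components of the forest `R ∖ {g}`. Put `D = T ∖ {e, f}`, so that `T ∖ {f} = D + e`,
`T' ∖ {f} = D + s_e` and `T ∖ {e} = T' ∖ {s_e} = D + f`, and let `s = xy`, `f = uv`.
If `x` and `y` are joined in `D + f`, then whether they are joined in `D + e` or in `D + s_e` is
decided by the components of `D` alone, because `f` is a bridge of `T` and of `T'`: `u` and `v`
are joined neither in `D + e` nor in `D + s_e`. Otherwise `s` covers both `e` and `s_e`, and the
two hypotheses say that the endpoints of `s_e` are joined in `D + e` and those of `e` in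
`D + s_e`; then `D + e` and `D + s_e` have the same components.
-/

/-- A non-tree edge `s` covers a tree edge `g` with respect to the spanning tree edge
set `R` if the spanning subgraph with edge set `(R ∖ {g}) ∪ {s}` is connected
(equivalently, is again a spanning tree). -/
def covers {V : Type} (R : Set (Sym2 V)) (s g : Sym2 V) : Prop :=
  (SimpleGraph.fromEdgeSet ((R \ {g}) ∪ {s})).Connected

namespace SimpleGraph

variable {V : Type*} {D G H : SimpleGraph V} {a b p q u v x y : V}

theorem Reachable.sup_edge_cases (h : (G ⊔ edge a b).Reachable x y) :
    G.Reachable x y ∨ G.Reachable x a ∧ G.Reachable b y ∨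
      G.Reachable x b ∧ G.Reachable a y := by
  rw [reachable_iff_reflTransGen] at h
  induction h with
  | refl => exact .inl .rfl
  | @tail w z _ hwz ih =>
    rw [sup_adj, edge_adj] at hwz
    rcases hwz with hwz | ⟨⟨rfl, rfl⟩ | ⟨rfl, rfl⟩, -⟩
    · have := hwz.reachable
      grind [Reachable.trans]
    all_goals grind [Reachable.trans, Reachable.symm, Reachable.refl]

theorem Reachable.of_sup_edge (h : (D ⊔ edge a b).Reachable x y) (hD : D ≤ G)
    (hab : G.Reachable a b) : G.Reachable x y := by
  rw [reachable_iff_reflTransGen] at h ⊢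
  refine h.lift' id fun c d hcd => (reachable_iff_reflTransGen c d).mp ?_
  rcases hcd with hcd | hcd
  · exact (hD hcd).reachable
  · rw [edge_adj] at hcd
    rcases hcd with ⟨⟨rfl, rfl⟩ | ⟨rfl, rfl⟩, -⟩
    exacts [hab, hab.symm]

theorem connected_sup_edge_iff_not_reachable (hH : (H ⊔ edge u v).Connected)
    (huv : ¬H.Reachable u v) : (H ⊔ edge x y).Connected ↔ ¬H.Reachable x y := by
  refine ⟨fun hK hxy => huv ((hK.preconnected u v).of_sup_edge le_rfl hxy), fun hxy => ?_⟩
  have hside : ∀ w, H.Reachable u w ∨ H.Reachable v w := fun w => by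
    rcases (hH.preconnected u w).sup_edge_cases with h | ⟨-, h⟩ | ⟨h, -⟩
    exacts [.inl h, .inr h, absurd h huv]
  have hxyK : (H ⊔ edge x y).Reachable x y := by
    refine Adj.reachable (Or.inr ?_)
    rw [edge_adj]
    exact ⟨.inl ⟨rfl, rfl⟩, fun h => hxy (h ▸ .rfl)⟩
  have hK : (H ⊔ edge x y).Reachable u v := by
    have hle : H ≤ H ⊔ edge x y := le_sup_left
    rcases hside x with hx | hx <;> rcases hside y with hy | hy
    · exact absurd (hx.symm.trans hy) hxy
    · exact (hx.mono hle).trans (hxyK.trans (hy.mono hle).symm)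
    · exact (hy.mono hle).trans (hxyK.symm.trans (hx.mono hle).symm)
    · exact absurd (hx.symm.trans hy) hxy
  have := hH.nonempty
  exact ⟨fun w w' => (hH.preconnected w w').of_sup_edge le_sup_left hK⟩

theorem reachable_iff_of_reachable_sup_edge (hxy : (D ⊔ edge u v).Reachable x y)
    (hG : D ≤ G) (hH : D ≤ H) (hGuv : ¬G.Reachable u v) (hHuv : ¬H.Reachable u v) :
    G.Reachable x y ↔ H.Reachable x y := by
  rcases hxy.sup_edge_cases with h | ⟨hxu, hvy⟩ | ⟨hxv, huy⟩
  · exact iff_of_true (h.mono hG) (h.mono hH)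
  · refine iff_of_false (fun h => hGuv ?_) (fun h => hHuv ?_)
    · exact (hxu.mono hG).symm.trans (h.trans (hvy.mono hG).symm)
    · exact (hxu.mono hH).symm.trans (h.trans (hvy.mono hH).symm)
  · refine iff_of_false (fun h => hGuv ?_) (fun h => hHuv ?_)
    · exact (huy.mono hG).trans (h.symm.trans (hxv.mono hG))
    · exact (huy.mono hH).trans (h.symm.trans (hxv.mono hH))

theorem reachable_sup_edge_eq (hab : (D ⊔ edge p q).Reachable a b)
    (hpq : (D ⊔ edge a b).Reachable p q) :
    (D ⊔ edge p q).Reachable = (D ⊔ edge a b).Reachable := by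
  ext x y
  exact ⟨fun h => h.of_sup_edge le_sup_left hpq, fun h => h.of_sup_edge le_sup_left hab⟩

theorem reachable_sup_edge_iff_of_exchange (hpq : ¬(D ⊔ edge p q).Reachable u v)
    (hab : ¬(D ⊔ edge a b).Reachable u v)
    (h₁ : ¬(¬(D ⊔ edge p q).Reachable a b ∧ ¬(D ⊔ edge u v).Reachable x y))
    (h₂ : ¬(¬(D ⊔ edge a b).Reachable p q ∧ ¬(D ⊔ edge u v).Reachable x y)) :
    (D ⊔ edge p q).Reachable x y ↔ (D ⊔ edge a b).Reachable x y := by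
  by_cases hxy : (D ⊔ edge u v).Reachable x y
  · exact reachable_iff_of_reachable_sup_edge hxy le_sup_left le_sup_left hpq hab
  · rw [reachable_sup_edge_eq (not_not.mp fun h => h₁ ⟨h, hxy⟩)
      (not_not.mp fun h => h₂ ⟨h, hxy⟩)]

theorem IsAcyclic.not_reachable_fromEdgeSet_sdiff {R : Set (Sym2 V)}
    (hR : (fromEdgeSet R).IsAcyclic) (h : s(u, v) ∈ R) (huv : u ≠ v) :
    ¬(fromEdgeSet (R \ {s(u, v)})).Reachable u v := by
  have := isAcyclic_iff_forall_isBridge.mp hR (e := s(u, v)) (by simpa [h] using huv)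
  rwa [isBridge_iff, deleteEdges_fromEdgeSet] at this

theorem fromEdgeSet_sdiff_sup_edge {R : Set (Sym2 V)} (h : s(u, v) ∈ R) :
    fromEdgeSet (R \ {s(u, v)}) ⊔ edge u v = fromEdgeSet R := by
  rw [edge, ← fromEdgeSet_union, Set.sdiff_union_of_subset (Set.singleton_subset_iff.mpr h)]

theorem fromEdgeSet_exchange_sdiff {R : Set (Sym2 V)} {g : Sym2 V} (h : s(u, v) ≠ s(a, b)) :
    fromEdgeSet (((R \ {g}) ∪ {s(a, b)}) \ {s(u, v)}) =
      fromEdgeSet ((R \ {s(u, v)}) \ {g}) ⊔ edge a b := by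
  rw [edge, ← fromEdgeSet_union, Set.union_sdiff_distrib,
    Set.sdiff_singleton_eq_self (Set.mem_singleton_iff.not.mpr h), sdiff_right_comm]

end SimpleGraph

open SimpleGraph

theorem covers_iff_not_reachable {V : Type} {R : Set (Sym2 V)} {u v x y : V}
    (hR : (fromEdgeSet R).IsTree) (hg : s(u, v) ∈ R) (huv : u ≠ v) :
    covers R s(x, y) s(u, v) ↔ ¬(fromEdgeSet (R \ {s(u, v)})).Reachable x y := by
  rw [covers, fromEdgeSet_union]
  refine connected_sup_edge_iff_not_reachable ?_
    (hR.isAcyclic.not_reachable_fromEdgeSet_sdiff hg huv)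
  rw [fromEdgeSet_sdiff_sup_edge hg]
  exact hR.connected

theorem stmt_14_general {V : Type} (G : SimpleGraph V)
    (T : Set (Sym2 V)) (hT : T ⊆ G.edgeSet)
    (hTree : (SimpleGraph.fromEdgeSet T).IsTree)
    (e : Sym2 V) (he : e ∈ T) (se : Sym2 V) (hse : se ∈ G.edgeSet \ T)
    (T' : Set (Sym2 V)) (hT' : T' = (T \ {e}) ∪ {se})
    (hTree' : (SimpleGraph.fromEdgeSet T').IsTree)
    (f : Sym2 V) (hf : f ∈ T) (hfe : f ≠ e)
    (s : Sym2 V)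
    (hnot1 : ¬ (covers T se f ∧ covers T s e))
    (hnot2 : ¬ (covers T' e f ∧ covers T' s se)) :
    covers T s f ↔ covers T' s f := by
  cases f with | h u v
  cases e with | h p q
  cases se with | h a b
  cases s with | h x y
  subst hT'
  have hfT' : s(u, v) ∈ (T \ {s(p, q)}) ∪ {s(a, b)} := .inl ⟨hf, hfe⟩
  have huv : u ≠ v := (hT hf).ne
  rw [covers_iff_not_reachable hTree hf huv, covers_iff_not_reachable hTree he (hT he).ne]
    at hnot1
  rw [covers_iff_not_reachable hTree' hfT' huv,
    covers_iff_not_reachable hTree' (.inr rfl) hse.1.ne] at hnot2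
  rw [covers_iff_not_reachable hTree hf huv, covers_iff_not_reachable hTree' hfT' huv,
    not_iff_not]
  have hbridge := hTree.isAcyclic.not_reachable_fromEdgeSet_sdiff hf huv
  have hbridge' := hTree'.isAcyclic.not_reachable_fromEdgeSet_sdiff hfT' huv
  set D := fromEdgeSet ((T \ {s(u, v)}) \ {s(p, q)})
  have hTf : fromEdgeSet (T \ {s(u, v)}) = D ⊔ edge p q :=
    (fromEdgeSet_sdiff_sup_edge (R := T \ {s(u, v)}) ⟨he, hfe.symm⟩).symm
  have hTe : fromEdgeSet (T \ {s(p, q)}) = D ⊔ edge u v := by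
    rw [← fromEdgeSet_sdiff_sup_edge (R := T \ {s(p, q)}) ⟨hf, hfe⟩, sdiff_right_comm]
  have hT'f : fromEdgeSet (((T \ {s(p, q)}) ∪ {s(a, b)}) \ {s(u, v)}) = D ⊔ edge a b :=
    fromEdgeSet_exchange_sdiff fun h => hse.2 (h ▸ hf)
  have hT'se : ((T \ {s(p, q)}) ∪ {s(a, b)}) \ {s(a, b)} = T \ {s(p, q)} := by
    rw [Set.union_sdiff_right, Set.sdiff_singleton_eq_self fun h => hse.2 h.1]
  simp only [hTf, hTe, hT'f, hT'se] at hnot1 hnot2 hbridge hbridge' ⊢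
  exact reachable_sup_edge_iff_of_exchange hbridge hbridge' hnot1 hnot2

/-- A branch exchange replacing tree edge `e` by non-tree edge `s_e` changes the
covering relation only on the excluded pairs `(f, s)`: if neither
(`s_e` covers `f` w.r.t. `T` and `s` covers `e` w.r.t. `T`) nor
(`e` covers `f` w.r.t. `T'` and `s` covers `s_e` w.r.t. `T'`), then
`s` covers `f` w.r.t. `T` iff `s` covers `f` w.r.t. `T' = (T∖{e}) ∪ {s_e}`. -/
theorem stmt_14 {V : Type} [Finite V] (G : SimpleGraph V) (hG : G.Connected)
    (T : Set (Sym2 V)) (hT : T ⊆ G.edgeSet)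
    (hTree : (SimpleGraph.fromEdgeSet T).IsTree)
    (e : Sym2 V) (he : e ∈ T) (se : Sym2 V) (hse : se ∈ G.edgeSet \ T)
    (T' : Set (Sym2 V)) (hT' : T' = (T \ {e}) ∪ {se})
    (hTree' : (SimpleGraph.fromEdgeSet T').IsTree)
    (f : Sym2 V) (hf : f ∈ T) (hfe : f ≠ e)
    (s : Sym2 V) (hs : s ∈ G.edgeSet \ T) (hsse : s ≠ se)
    (hnot1 : ¬ (covers T se f ∧ covers T s e))
    (hnot2 : ¬ (covers T' e f ∧ covers T' s se)) :
    covers T s f ↔ covers T' s f :=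
  stmt_14_general G T hT hTree e he se hse T' hT' hTree' f hf hfe s hnot1 hnot2
end
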